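/- Let p be a prime, k a field of characteristic p, A a unital associative k-algebra, and d : A → A a k-linear derivation. On the k-module P = ⊕_{n≥1} A^{⊗n}, let b be the unsigned bar differential (acting as b_n on A^{⊗n}, with b_1 = 0), let L be the Leibniz extension of d (L(a_1⊗⋯⊗a_n) = ∑_i a_1⊗⋯⊗d(a_i)⊗⋯⊗a_n), and let σ ∈ End_k(P) be given by x ↦ x⊗1 on each A^{⊗n}. Then the total operator ∂_T := b + L satisfies ∂_T∘σ − σ∘∂_T = id_P, and consequently ∑_{i=0}^{p−1} ∂_T^{i}∘(−σ^{p−1})∘∂_T^{p−1−i} = id_P. (The augmented Mayer bar complex of a p-DG algebra, with its total p-differential, is null-homotopic.) -/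

import Mathlib

open TensorProduct

universe u

/-- `Tpow4M k A n` is the `(n+1)`-fold tensor power `A^{⊗(n+1)}` over `k`. -/
noncomputable def Tpow4M (k A : Type u) [CommRing k] [Ring A] [Algebra k A] :
    ℕ → ModuleCat.{u} k
  | 0 => ModuleCat.of k A
  | (n + 1) => ModuleCat.of k (TensorProduct k A (Tpow4M k A n))

variable (k A : Type u) [CommRing k] [Ring A] [Algebra k A]

/-- The unsigned bar map `b_{n+2} : A^{⊗(n+2)} → A^{⊗(n+1)}` (no signs). -/
noncomputable def bar4Map : (n : ℕ) → (↥(Tpow4M k A (n + 1)) →ₗ[k] ↥(Tpow4M k A n))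
  | 0 => LinearMap.mul' k A
  | (n + 1) =>
      ((LinearMap.rTensor (↥(Tpow4M k A n)) (LinearMap.mul' k A)
          ∘ₗ (TensorProduct.assoc k A A (↥(Tpow4M k A n))).symm.toLinearMap)
        + (LinearMap.lTensor A (bar4Map n) :
            A ⊗[k] (A ⊗[k] ↥(Tpow4M k A n)) →ₗ[k] A ⊗[k] ↥(Tpow4M k A n)))

/-- `σ_{n+1} : A^{⊗(n+1)} → A^{⊗(n+2)}`, `x ↦ x ⊗ 1`. -/
noncomputable def sig4Map : (n : ℕ) → (↥(Tpow4M k A n) →ₗ[k] ↥(Tpow4M k A (n + 1)))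
  | 0 => (TensorProduct.mk k A A).flip 1
  | (n + 1) =>
      (LinearMap.lTensor A (sig4Map n) :
        A ⊗[k] ↥(Tpow4M k A n) →ₗ[k] A ⊗[k] ↥(Tpow4M k A (n + 1)))

/-- The Leibniz extension `L : A^{⊗(n+1)} → A^{⊗(n+1)}` of a linear map `d : A → A`,
`a_1⊗⋯⊗a_m ↦ ∑_i a_1⊗⋯⊗d(a_i)⊗⋯⊗a_m`. -/
noncomputable def leib4Map (d : A →ₗ[k] A) :
    (n : ℕ) → (↥(Tpow4M k A n) →ₗ[k] ↥(Tpow4M k A n))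
  | 0 => d
  | (n + 1) =>
      ((LinearMap.rTensor (↥(Tpow4M k A n)) d :
            A ⊗[k] ↥(Tpow4M k A n) →ₗ[k] A ⊗[k] ↥(Tpow4M k A n))
        + LinearMap.lTensor A (leib4Map d n))

/-- `P = ⊕_{n ≥ 1} A^{⊗n}` as a `k`-module. -/
noncomputable abbrev stmt4P : Type u := DirectSum ℕ (fun n => ↥(Tpow4M k A n))

/-- The unsigned bar differential `b` on `P = ⊕_{n≥1} A^{⊗n}` (acting by `b_n` on
`A^{⊗n}`, with `b_1 = 0`). -/
noncomputable def bar4Op : Module.End k (stmt4P k A) :=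
  DirectSum.toModule k ℕ (stmt4P k A)
    (fun n =>
      match n with
      | 0 => 0
      | (m + 1) => DirectSum.lof k ℕ (fun i => ↥(Tpow4M k A i)) m ∘ₗ bar4Map k A m)

/-- The operator `σ : x ↦ x ⊗ 1` on `P`. -/
noncomputable def sig4Op : Module.End k (stmt4P k A) :=
  DirectSum.toModule k ℕ (stmt4P k A)
    (fun n => DirectSum.lof k ℕ (fun i => ↥(Tpow4M k A i)) (n + 1) ∘ₗ sig4Map k A n)

/-- The Leibniz extension of `d` as an operator on `P`. -/
noncomputable def leib4Op (d : A →ₗ[k] A) : Module.End k (stmt4P k A) :=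
  DirectSum.toModule k ℕ (stmt4P k A)
    (fun n => DirectSum.lof k ℕ (fun i => ↥(Tpow4M k A i)) n ∘ₗ leib4Map k A d n)

/-!
Write `∂ = b + L`. On `A^{⊗(n+1)}`, `b (x ⊗ 1) = x + (b x) ⊗ 1`, because the last face of `b`
multiplies the new factor `1` into `x` and every other face commutes with `- ⊗ 1`; and
`L (x ⊗ 1) = (L x) ⊗ 1` because `d 1 = 0`. Peeling off the first tensor factor, both become
identities of linear maps proved by induction on `n`, and together they give `∂σ - σ∂ = 1`.

The second identity holds in any ring `R` with `(p : R) = 0` and elements `D, σ` with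
`Dσ - σD = 1`. Since `(p - 1).choose i` is `(-1) ^ i` modulo `p`, the commuting operators `l = D · _`
and `r = _ · D` satisfy `∑ l^i r^(p-1-i) = (l - r)^(p-1) = ad_D^(p-1)`, so the sum equals
`-ad_D^(p-1)(σ^(p-1)) = -(p-1)!`, which is `1` by Wilson's theorem.
-/

open Finset LinearMap Nat TensorProduct DirectSum

section CharPRing
variable {R : Type*} [Ring R] {p : ℕ}

theorem cast_factorial_prime_sub_one (hp : p.Prime) (hR : (p : R) = 0) :
    ((p - 1)! : R) = -1 := by
  have := Fact.mk hp
  obtain ⟨c, hc⟩ : p ∣ (p - 1)! + 1 := by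
    rw [← ZMod.natCast_eq_zero_iff, Nat.cast_add, ZMod.wilsons_lemma, Nat.cast_one,
      neg_add_cancel]
  have hsum : (((p - 1)! + 1 : ℕ) : R) = 0 := by rw [hc, Nat.cast_mul, hR, zero_mul]
  exact eq_neg_of_add_eq_zero_left (by exact_mod_cast hsum)

theorem cast_choose_prime_sub_one (hp : p.Prime) (hR : (p : R) = 0) :
    ∀ {i : ℕ}, i < p → ((p - 1).choose i : R) = (-1) ^ i
  | 0, _ => by simp
  | i + 1, hi => by
    have pascal : (p - 1).choose i + (p - 1).choose (i + 1) = p.choose (i + 1) := by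
      rw [← Nat.choose_succ_succ', Nat.sub_add_cancel hp.one_le]
    have hdvd : ((p.choose (i + 1) : ℕ) : R) = 0 := by
      obtain ⟨c, hc⟩ := hp.dvd_choose_self i.succ_ne_zero hi
      rw [hc, Nat.cast_mul, hR, zero_mul]
    rw [← pascal, Nat.cast_add, cast_choose_prime_sub_one hp hR (by omega)] at hdvd
    rw [pow_succ, mul_neg_one]
    exact eq_neg_of_add_eq_zero_right hdvd

theorem Commute.sub_pow_prime_sub_one {x y : R} (h : Commute x y) (hp : p.Prime)
    (hR : (p : R) = 0) :
    (x - y) ^ (p - 1) = ∑ i ∈ range p, x ^ i * y ^ (p - 1 - i) := by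
  have hsign : ((-1 : R) ^ (p - 1)) = 1 := by
    rw [← cast_choose_prime_sub_one hp hR (Nat.sub_lt hp.pos one_pos), Nat.choose_self,
      Nat.cast_one]
  rw [sub_eq_add_neg, (h.neg_right).add_pow, Nat.sub_add_cancel hp.one_le]
  refine sum_congr rfl fun i hi => ?_
  have hi : i < p := mem_range.mp hi
  rw [cast_choose_prime_sub_one hp hR hi, neg_pow, mul_assoc, mul_assoc,
    ← ((Commute.neg_one_left y).pow_pow i (p - 1 - i)).eq, ← mul_assoc ((-1) ^ (p - 1 - i)),
    ← pow_add, Nat.sub_add_cancel (Nat.le_sub_one_of_lt hi), hsign, one_mul]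

theorem commutator_pow_succ {D σ : R} (h : D * σ - σ * D = 1) (m : ℕ) :
    D * σ ^ (m + 1) - σ ^ (m + 1) * D = ((m + 1 : ℕ) : R) * σ ^ m := by
  induction m with
  | zero => simpa using h
  | succ m ih =>
    calc D * σ ^ (m + 2) - σ ^ (m + 2) * D
        = (D * σ ^ (m + 1) - σ ^ (m + 1) * D) * σ + σ ^ (m + 1) * (D * σ - σ * D) := by
          simp only [pow_succ, sub_mul, mul_sub, mul_assoc]; abel
      _ = ((m + 1 + 1 : ℕ) : R) * σ ^ (m + 1) := by
          rw [ih, h, mul_assoc, ← pow_succ, mul_one, Nat.cast_succ (m + 1), add_mul, one_mul]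

theorem ad_pow_pow_self {D σ : R} (h : D * σ - σ * D = 1) (m : ℕ) :
    ((mulLeft ℤ D - mulRight ℤ D) ^ m) (σ ^ m) = (m ! : R) := by
  induction m with
  | zero => simp
  | succ m ih =>
    rw [pow_succ, Module.End.mul_apply, LinearMap.sub_apply, mulLeft_apply, mulRight_apply,
      commutator_pow_succ h, ← nsmul_eq_mul, map_nsmul, ih, nsmul_eq_mul, ← Nat.cast_mul,
      Nat.factorial_succ]

theorem sum_pow_mul_mul_pow_eq_ad_pow (hp : p.Prime) (hR : (p : R) = 0) (D X : R) :
    ∑ i ∈ range p, D ^ i * X * D ^ (p - 1 - i) = ((mulLeft ℤ D - mulRight ℤ D) ^ (p - 1)) X := by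
  have hEnd : (p : Module.End ℤ R) = 0 := by
    ext x
    simp [hR]
  rw [(commute_mulLeft_right D D).sub_pow_prime_sub_one hp hEnd, LinearMap.sum_apply]
  simp [pow_mulLeft, pow_mulRight, mul_assoc]

theorem sum_pow_mul_neg_pow_mul_pow_eq_one (hp : p.Prime) (hR : (p : R) = 0) {D σ : R}
    (h : D * σ - σ * D = 1) :
    ∑ i ∈ range p, D ^ i * -σ ^ (p - 1) * D ^ (p - 1 - i) = 1 := by
  rw [sum_pow_mul_mul_pow_eq_ad_pow hp hR, map_neg, ad_pow_pow_self h,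
    cast_factorial_prime_sub_one hp hR, neg_neg]

end CharPRing

section TensorSteps
variable {k A : Type u} [CommRing k] [Ring A] [Algebra k A]
variable {T : Type u} [AddCommGroup T] [Module k T]

/- `bar4Map k A (n + 1) = barExt k A _ (bar4Map k A n)` and
`leib4Map k A d (n + 1) = leibExt _ d (leib4Map k A d n)` hold by `rfl`, so the inductive steps
below are statements about an arbitrary module `T` in place of `A^{⊗(n+1)}`. -/
variable (k A T) in
noncomputable def barExt (β : A ⊗[k] T →ₗ[k] T) : A ⊗[k] (A ⊗[k] T) →ₗ[k] A ⊗[k] T :=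
  rTensor T (mul' k A) ∘ₗ (TensorProduct.assoc k A A T).symm + lTensor A β

variable (T) in
noncomputable def leibExt (d : A →ₗ[k] A) (δ : T →ₗ[k] T) : A ⊗[k] T →ₗ[k] A ⊗[k] T :=
  rTensor T d + lTensor A δ

theorem barExt_tmul_tmul (β : A ⊗[k] T →ₗ[k] T) (a b : A) (x : T) :
    barExt k A T β (a ⊗ₜ (b ⊗ₜ x)) = (a * b) ⊗ₜ x + a ⊗ₜ β (b ⊗ₜ x) := by
  simp [barExt]

theorem barExt_mul'_comp_lTensor :
    barExt k A A (mul' k A) ∘ₗ lTensor A ((TensorProduct.mk k A A).flip 1)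
      = LinearMap.id + (TensorProduct.mk k A A).flip 1 ∘ₗ mul' k A := by
  ext a b
  simp [barExt_tmul_tmul, add_comm]

theorem barExt_barExt_comp_lTensor_lTensor {σ : T →ₗ[k] A ⊗[k] T} {β : A ⊗[k] T →ₗ[k] T}
    (h : barExt k A T β ∘ₗ lTensor A σ = LinearMap.id + σ ∘ₗ β) :
    barExt k A (A ⊗[k] T) (barExt k A T β) ∘ₗ lTensor A (lTensor A σ)
      = LinearMap.id + lTensor A σ ∘ₗ barExt k A T β := by
  ext a b x
  have hx := congr($h (b ⊗ₜ x))
  simp only [coe_comp, Function.comp_apply, lTensor_tmul, LinearMap.add_apply, id_coe, id_eq] at hx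
  simp [barExt_tmul_tmul, hx, tmul_add]
  abel

theorem leibExt_comp_flip_mk_one {d : A →ₗ[k] A} (hd : d 1 = 0) :
    leibExt A d d ∘ₗ (TensorProduct.mk k A A).flip 1 = (TensorProduct.mk k A A).flip 1 ∘ₗ d := by
  ext a
  simp [leibExt, hd]

theorem leibExt_leibExt_comp_lTensor {d : A →ₗ[k] A} {σ : T →ₗ[k] A ⊗[k] T} {δ : T →ₗ[k] T}
    (h : leibExt T d δ ∘ₗ σ = σ ∘ₗ δ) :
    leibExt (A ⊗[k] T) d (leibExt T d δ) ∘ₗ lTensor A σ = lTensor A σ ∘ₗ leibExt T d δ := by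
  rw [leibExt, add_comp, ← lTensor_comp, h, lTensor_comp, rTensor_comp_lTensor,
    ← lTensor_comp_rTensor, leibExt, comp_add]

end TensorSteps

section TensorPowers
variable {k A : Type u} [CommRing k] [Ring A] [Algebra k A]

theorem bar4Map_zero_comp_sig4Map_zero : bar4Map k A 0 ∘ₗ sig4Map k A 0 = LinearMap.id := by
  ext a
  exact mul_one (show A from a)

theorem bar4Map_succ_comp_sig4Map_succ (m : ℕ) :
    bar4Map k A (m + 1) ∘ₗ sig4Map k A (m + 1) = LinearMap.id + sig4Map k A m ∘ₗ bar4Map k A m := by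
  induction m with
  | zero => exact barExt_mul'_comp_lTensor (k := k) (A := A)
  | succ m ih => exact barExt_barExt_comp_lTensor_lTensor ih

theorem leib4Map_succ_comp_sig4Map {d : A →ₗ[k] A} (hd : d 1 = 0) (n : ℕ) :
    leib4Map k A d (n + 1) ∘ₗ sig4Map k A n = sig4Map k A n ∘ₗ leib4Map k A d n := by
  induction n with
  | zero => exact leibExt_comp_flip_mk_one (k := k) (A := A) hd
  | succ n ih => exact leibExt_leibExt_comp_lTensor ih

end TensorPowers

section Operators
variable {k A : Type u} [CommRing k] [Ring A] [Algebra k A]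

theorem bar4Op_lof_zero (x : Tpow4M k A 0) :
    bar4Op k A (lof k ℕ (fun i => Tpow4M k A i) 0 x) = 0 := by
  simp [bar4Op, toModule_lof]

theorem bar4Op_lof_succ (m : ℕ) (x : Tpow4M k A (m + 1)) :
    bar4Op k A (lof k ℕ (fun i => Tpow4M k A i) (m + 1) x)
      = lof k ℕ (fun i => Tpow4M k A i) m (bar4Map k A m x) := by
  simp [bar4Op, toModule_lof]

theorem sig4Op_lof (n : ℕ) (x : Tpow4M k A n) :
    sig4Op k A (lof k ℕ (fun i => Tpow4M k A i) n x)
      = lof k ℕ (fun i => Tpow4M k A i) (n + 1) (sig4Map k A n x) := by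
  simp [sig4Op, toModule_lof]

theorem leib4Op_lof (d : A →ₗ[k] A) (n : ℕ) (x : Tpow4M k A n) :
    leib4Op k A d (lof k ℕ (fun i => Tpow4M k A i) n x)
      = lof k ℕ (fun i => Tpow4M k A i) n (leib4Map k A d n x) := by
  simp [leib4Op, toModule_lof]

theorem bar4Op_add_leib4Op_commutator_sig4Op {d : A →ₗ[k] A} (hd : d 1 = 0) :
    (bar4Op k A + leib4Op k A d) * sig4Op k A - sig4Op k A * (bar4Op k A + leib4Op k A d)
      = 1 := by
  refine DirectSum.linearMap_ext _ fun n => LinearMap.ext fun x => ?_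
  have hleib := congr($(leib4Map_succ_comp_sig4Map hd n) x)
  simp only [coe_comp, Function.comp_apply] at hleib
  simp only [coe_comp, Function.comp_apply, LinearMap.sub_apply, Module.End.mul_apply,
    LinearMap.add_apply, Module.End.one_apply, map_add, sig4Op_lof, leib4Op_lof, hleib]
  cases n with
  | zero =>
    have hbar := congr($(bar4Map_zero_comp_sig4Map_zero (k := k) (A := A)) x)
    simp only [coe_comp, Function.comp_apply] at hbar
    simp [bar4Op_lof_succ, bar4Op_lof_zero, hbar]
  | succ m =>
    have hbar := congr($(bar4Map_succ_comp_sig4Map_succ (k := k) (A := A) m) x)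
    simp only [coe_comp, Function.comp_apply, LinearMap.add_apply] at hbar
    simp [bar4Op_lof_succ, sig4Op_lof, hbar]

end Operators

/-- for a `k`-linear derivation `d` of `A` over a field of characteristic
`p`, the total operator `∂_T = b + L` on `P = ⊕_{n≥1} A^{⊗n}` satisfies
`∂_T∘σ − σ∘∂_T = id`, and consequently
`∑_{i=0}^{p−1} ∂_T^i ∘ (−σ^{p−1}) ∘ ∂_T^{p−1−i} = id`:
the augmented Mayer bar complex of a `p`-DG algebra is null-homotopic. -/
theorem stmt_4 (p : ℕ) (hp : p.Prime) (k A : Type u) [Field k] [CharP k p]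
    [Ring A] [Algebra k A] (d : A →ₗ[k] A)
    (hd : ∀ a b : A, d (a * b) = d a * b + a * d b) :
    (bar4Op k A + leib4Op k A d) * sig4Op k A - sig4Op k A * (bar4Op k A + leib4Op k A d)
        = 1 ∧
      (Finset.range p).sum
          (fun i =>
            (bar4Op k A + leib4Op k A d) ^ i * (-(sig4Op k A ^ (p - 1)))
              * (bar4Op k A + leib4Op k A d) ^ (p - 1 - i)) = 1 := by
  have hd1 : d 1 = 0 := by simpa using hd 1 1
  have hcomm := bar4Op_add_leib4Op_commutator_sig4Op hd1
  have hp0 : (p : Module.End k (stmt4P k A)) = 0 := by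
    rw [← map_natCast (algebraMap k _), CharP.cast_eq_zero, map_zero]
  exact ⟨hcomm, sum_pow_mul_neg_pow_mul_pow_eq_one hp hp0 hcomm⟩
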